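/- Let Ω ⊆ B_R ⊆ ℝⁿ be a measurable set such that |(∂Ω)^r| ≤ C r^δ for all r ∈ (0, 2R], for some δ ∈ (0, 1] and C > 0. Then for every s ∈ (0, δ), the fractional Sobolev seminorm satisfies [χ_Ω]_{W^{s,1}(B_R)} = ∫_{B_R}∫_{B_R} |χ_Ω(x) − χ_Ω(y)| / |x−y|^{n+s} dy dx ≤ C', with C' depending only on C, n, R, s, δ. -/

import Mathlib

/-!
If `χ_Ω(x) ≠ χ_Ω(y)`, the segment `[x, y]` meets `∂Ω`, so `x` lies in the open
`r`-neighbourhood of `∂Ω` for every `r > |x - y|`. For `x, y ∈ B_R` we have `|x - y| < a := 2R`;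
sorting the pairs into the dyadic shells `a / 2^(k+1) ≤ |x - y| < a / 2^k` and integrating in `y`
first, the `k`-th shell contributes at most
`|(∂Ω)^(r_k)| · |B_(r_k)| · r_(k+1)^(-(n+s)) ≤ 2^(n+s) |B_1| C r_k^(δ-s)`, `r_k = a / 2^k`,
a geometric series because `s < δ`.
-/

open MeasureTheory Metric Set
open scoped ENNReal

theorem IsPreconnected.inter_frontier_nonempty {α : Type*} [TopologicalSpace α] {s t : Set α}
    (hs : IsPreconnected s) (hst : (s ∩ t).Nonempty) (hst' : (s \ t).Nonempty) :
    (s ∩ frontier t).Nonempty := by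
  have := Subtype.preconnectedSpace hs
  obtain ⟨x, hxs, hxt⟩ := hst
  obtain ⟨y, hys, hyt⟩ := hst'
  obtain ⟨z, hz⟩ := (nonempty_frontier_iff (s := ((↑) : s → α) ⁻¹' t)).mpr
    ⟨⟨⟨x, hxs⟩, hxt⟩, ne_univ_iff_exists_notMem _ |>.mpr ⟨⟨y, hys⟩, hyt⟩⟩
  exact ⟨z, z.2, continuous_subtype_val.frontier_preimage_subset t hz⟩

section PseudoMetric

variable {X : Type*} [PseudoMetricSpace X]

def dyadicShell (x : X) (a : ℝ) (k : ℕ) : Set X := ball x (a / 2 ^ k) \ ball x (a / 2 ^ (k + 1))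

theorem measurableSet_dyadicShell [MeasurableSpace X] [OpensMeasurableSpace X] (x : X) (a : ℝ)
    (k : ℕ) : MeasurableSet (dyadicShell x a k) :=
  measurableSet_ball.diff measurableSet_ball

theorem exists_mem_dyadicShell {x y : X} {a : ℝ} (hxy : 0 < dist y x) (ha : dist y x < a) :
    ∃ k, y ∈ dyadicShell x a k := by
  have hex : ∃ k : ℕ, a / 2 ^ (k + 1) ≤ dist y x := by
    have ha0 : 0 < a := hxy.trans ha
    obtain ⟨k, hk⟩ := exists_pow_lt_of_lt_one (div_pos hxy ha0) one_half_lt_one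
    refine ⟨k, le_of_lt ?_⟩
    calc a / 2 ^ (k + 1) ≤ a / 2 ^ k := by gcongr <;> norm_num
      _ = (1 / 2) ^ k * a := by rw [one_div_pow, one_div_mul_eq_div]
      _ < dist y x := (lt_div_iff₀ ha0).mp hk
  refine ⟨Nat.find hex, ?_, not_lt.mpr (Nat.find_spec hex)⟩
  rw [mem_ball]
  cases hk : Nat.find hex with
  | zero => simpa using ha
  | succ j => exact not_le.mp (Nat.find_min hex (hk ▸ j.lt_succ_self))

end PseudoMetric

section NormedSpace

variable {E : Type*} [NormedAddCommGroup E] [NormedSpace ℝ E]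

theorem mem_thickening_frontier_of_dist_lt {Ω : Set E} {x y : E} {r : ℝ}
    (h : ¬(x ∈ Ω ↔ y ∈ Ω)) (hr : dist x y < r) : x ∈ thickening r (frontier Ω) := by
  have hx := left_mem_segment ℝ x y
  have hy := right_mem_segment ℝ x y
  obtain ⟨z, hzs, hz⟩ := (convex_segment x y).isPreconnected.inter_frontier_nonempty
    (by by_cases hxΩ : x ∈ Ω <;> [exact ⟨x, hx, hxΩ⟩; exact ⟨y, hy, by tauto⟩])
    (by by_cases hxΩ : x ∈ Ω <;> [exact ⟨y, hy, by tauto⟩; exact ⟨x, hx, hxΩ⟩])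
  refine mem_thickening_iff.mpr ⟨z, hz, lt_of_le_of_lt ?_ hr⟩
  linarith [dist_add_dist_of_mem_segment hzs, dist_nonneg (x := z) (y := y)]

theorem ofReal_abs_indicator_sub_div_rpow_le_tsum {Ω : Set E} {x y : E} {a p : ℝ} (hp : 0 ≤ p)
    (ha : dist y x < a) :
    ENNReal.ofReal (|Ω.indicator (fun _ => (1:ℝ)) x - Ω.indicator (fun _ => (1:ℝ)) y| /
        dist x y ^ p) ≤
      ∑' k, (thickening (a / 2 ^ k) (frontier Ω)).indicator 1 x *
        (dyadicShell x a k).indicator (fun _ => ENNReal.ofReal ((a / 2 ^ (k + 1)) ^ (-p))) y := by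
  by_cases hΩ : x ∈ Ω ↔ y ∈ Ω
  · have : Ω.indicator (fun _ => (1:ℝ)) x = Ω.indicator (fun _ => (1:ℝ)) y := by
      by_cases hx : x ∈ Ω <;> simp [hx, ← hΩ]
    simp [this]
  have hxy : 0 < dist y x := dist_pos.mpr fun h => hΩ (h ▸ Iff.rfl)
  obtain ⟨k, hk⟩ := exists_mem_dyadicShell hxy ha
  have hx : x ∈ thickening (a / 2 ^ k) (frontier Ω) :=
    mem_thickening_frontier_of_dist_lt hΩ (dist_comm x y ▸ mem_ball.mp hk.1)
  have habs : |Ω.indicator (fun _ => (1:ℝ)) x - Ω.indicator (fun _ => (1:ℝ)) y| = 1 := by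
    by_cases hxΩ : x ∈ Ω <;> by_cases hyΩ : y ∈ Ω <;> simp_all
  refine le_trans ?_ (ENNReal.le_tsum k)
  rw [indicator_of_mem hx, indicator_of_mem hk, habs, Pi.one_apply, one_mul, one_div,
    ← Real.rpow_neg dist_nonneg]
  have hρ : 0 < a / 2 ^ (k + 1) := by have := hxy.trans ha; positivity
  exact ENNReal.ofReal_le_ofReal
    (Real.rpow_le_rpow_of_nonpos hρ (dist_comm x y ▸ not_lt.mp hk.2) (neg_nonpos.mpr hp))

variable [MeasurableSpace E] [BorelSpace E]

/- `Ω` need not be measurable: the integrand is only dominated, one variable at a time, by sums of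
indicators of measurable sets, which is all that monotonicity of `lintegral` requires. -/
theorem lintegral_lintegral_abs_indicator_sub_div_rpow_le (μ : Measure E) [μ.IsAddHaarMeasure]
    (Ω : Set E) {T : Set E} (hT : MeasurableSet T) {a p : ℝ} (hp : 0 ≤ p)
    (hTa : ∀ x ∈ T, ∀ y ∈ T, dist y x < a) :
    ∫⁻ x in T, ∫⁻ y in T,
        ENNReal.ofReal (|Ω.indicator (fun _ => (1:ℝ)) x - Ω.indicator (fun _ => (1:ℝ)) y| /
          dist x y ^ p) ∂μ ∂μ ≤
      ∑' k, ENNReal.ofReal ((a / 2 ^ (k + 1)) ^ (-p)) * μ (ball 0 (a / 2 ^ k)) *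
        μ (thickening (a / 2 ^ k) (frontier Ω)) := by
  set c : ℕ → ℝ≥0∞ := fun k => ENNReal.ofReal ((a / 2 ^ (k + 1)) ^ (-p))
  set U : ℕ → Set E := fun k => thickening (a / 2 ^ k) (frontier Ω)
  have hU : ∀ k, MeasurableSet (U k) := fun k => isOpen_thickening.measurableSet
  have hshell : ∀ x k, ∫⁻ y in T, (dyadicShell x a k).indicator (fun _ => c k) y ∂μ ≤
      c k * μ (ball 0 (a / 2 ^ k)) := fun x k => by
    rw [lintegral_indicator_const (measurableSet_dyadicShell x a k),
      ← Measure.addHaar_ball_center μ x]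
    exact mul_le_mul_right
      ((Measure.restrict_apply_le _ _).trans (measure_mono sdiff_subset)) _
  calc _ ≤ ∫⁻ x in T, ∑' k, (U k).indicator 1 x * (c k * μ (ball 0 (a / 2 ^ k))) ∂μ := by
        refine setLIntegral_mono' hT fun x hx => ?_
        calc _ ≤ ∫⁻ y in T, ∑' k, (U k).indicator 1 x * (dyadicShell x a k).indicator
                (fun _ => c k) y ∂μ :=
              setLIntegral_mono' hT fun y hy => ofReal_abs_indicator_sub_div_rpow_le_tsum hp
                (hTa x hx y hy)
          _ = ∑' k, ∫⁻ y in T, (U k).indicator 1 x * (dyadicShell x a k).indicator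
                (fun _ => c k) y ∂μ :=
              lintegral_tsum fun k => (measurable_const.mul (measurable_const.indicator
                (measurableSet_dyadicShell x a k))).aemeasurable
          _ ≤ _ := ENNReal.tsum_le_tsum fun k => by
              rw [lintegral_const_mul _ (measurable_const.indicator
                (measurableSet_dyadicShell x a k))]
              exact mul_le_mul_right (hshell x k) _
    _ = ∑' k, ∫⁻ x in T, (U k).indicator 1 x * (c k * μ (ball 0 (a / 2 ^ k))) ∂μ :=
        lintegral_tsum fun k => ((measurable_one.indicator (hU k)).mul_const _).aemeasurable
    _ ≤ _ := ENNReal.tsum_le_tsum fun k => by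
        rw [lintegral_mul_const _ (measurable_one.indicator (hU k)),
          lintegral_indicator_one (hU k), mul_comm]
        exact mul_le_mul_right (Measure.restrict_apply_le _ _) _

end NormedSpace

theorem div_two_rpow_neg_mul_pow_mul_rpow {ρ : ℝ} (hρ : 0 < ρ) (m : ℕ) (C s δ : ℝ) :
    (ρ / 2) ^ (-(m + s)) * ρ ^ m * (C * ρ ^ δ) = C * 2 ^ (m + s) * ρ ^ (δ - s) := by
  have hρ' : ρ ^ (δ - s) = ρ ^ (-(m + s)) * ρ ^ (m : ℝ) * ρ ^ δ := by
    rw [← Real.rpow_add hρ, ← Real.rpow_add hρ]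
    ring_nf
  rw [Real.div_rpow hρ.le zero_le_two, Real.rpow_neg zero_le_two, div_inv_eq_mul,
    ← Real.rpow_natCast ρ m, hρ']
  ring

theorem tsum_ofReal_div_two_pow_rpow_ne_top {a t : ℝ} (ha : 0 ≤ a) (ht : 0 < t) :
    ∑' k : ℕ, ENNReal.ofReal ((a / 2 ^ k) ^ t) ≠ ∞ := by
  have hq : (2 ^ t)⁻¹ < (1 : ℝ) := inv_lt_one_of_one_lt₀ (Real.one_lt_rpow one_lt_two ht)
  have hterm : ∀ k : ℕ, (a / 2 ^ k) ^ t = a ^ t * ((2 : ℝ) ^ t)⁻¹ ^ k := fun k => by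
    rw [Real.div_rpow ha (by positivity), ← Real.rpow_pow_comm zero_le_two, inv_pow,
      div_eq_mul_inv]
  simp_rw [hterm]
  rw [← ENNReal.ofReal_tsum_of_nonneg (fun k => by positivity)
    ((summable_geometric_of_lt_one (by positivity) hq).mul_left _)]
  exact ENNReal.ofReal_ne_top

section Haar

variable {E : Type*} [NormedAddCommGroup E] [NormedSpace ℝ E] [FiniteDimensional ℝ E]
  [MeasurableSpace E] [BorelSpace E] (μ : Measure E) [μ.IsAddHaarMeasure]

theorem ofReal_rpow_mul_measure_ball_mul_le {S : Set E} {C s δ ρ : ℝ} (hρ : 0 < ρ)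
    (hS : μ S ≤ ENNReal.ofReal (C * ρ ^ δ)) :
    ENNReal.ofReal ((ρ / 2) ^ (-(Module.finrank ℝ E + s))) * μ (ball 0 ρ) * μ S ≤
      μ (ball 0 1) * ENNReal.ofReal (C * 2 ^ (Module.finrank ℝ E + s)) *
        ENNReal.ofReal (ρ ^ (δ - s)) := by
  set m := Module.finrank ℝ E
  have hc : 0 ≤ (ρ / 2) ^ (-(m + s)) := by positivity
  calc _ ≤ ENNReal.ofReal ((ρ / 2) ^ (-(m + s))) * (ENNReal.ofReal (ρ ^ m) * μ (ball 0 1)) *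
        ENNReal.ofReal (C * ρ ^ δ) := by
        rw [Measure.addHaar_ball_of_pos μ 0 hρ]
        exact mul_le_mul_right hS _
    _ = μ (ball 0 1) * ENNReal.ofReal ((ρ / 2) ^ (-(m + s)) * ρ ^ m * (C * ρ ^ δ)) := by
        rw [ENNReal.ofReal_mul (mul_nonneg hc (by positivity)), ENNReal.ofReal_mul hc]
        ring
    _ = _ := by
        rw [div_two_rpow_neg_mul_pow_mul_rpow hρ, ENNReal.ofReal_mul' (by positivity), mul_assoc]

end Haar

theorem fractional_seminorm_bound_general (n : ℕ) (R C δ s : ℝ) (hR : 0 < R)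
    (hs : s ∈ Set.Ioo (0:ℝ) δ) :
    ∃ C' : ℝ, 0 < C' ∧ ∀ Ω : Set (EuclideanSpace ℝ (Fin n)),
      Ω ⊆ Metric.ball 0 R →
      (∀ r ∈ Set.Ioc (0:ℝ) (2 * R),
        volume (Metric.thickening r (frontier Ω)) ≤ ENNReal.ofReal (C * r ^ δ)) →
      (∫⁻ x in Metric.ball (0 : EuclideanSpace ℝ (Fin n)) R,
        ∫⁻ y in Metric.ball (0 : EuclideanSpace ℝ (Fin n)) R,
          ENNReal.ofReal
            (|Set.indicator Ω (fun _ => (1:ℝ)) x - Set.indicator Ω (fun _ => (1:ℝ)) y| /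
              dist x y ^ ((n : ℝ) + s)))
        ≤ ENNReal.ofReal C' := by
  obtain ⟨hs0, hsδ⟩ := hs
  set K : ℝ≥0∞ := volume (ball (0 : EuclideanSpace ℝ (Fin n)) 1) *
    ENNReal.ofReal (C * 2 ^ ((n : ℝ) + s)) *
      ∑' k : ℕ, ENNReal.ofReal ((2 * R / 2 ^ k) ^ (δ - s))
  have hK : K ≠ ∞ := ENNReal.mul_ne_top (ENNReal.mul_ne_top measure_ball_lt_top.ne
    ENNReal.ofReal_ne_top) (tsum_ofReal_div_two_pow_rpow_ne_top (by positivity) (by linarith))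
  refine ⟨K.toReal + 1, by positivity, fun Ω _ hΩ => ?_⟩
  have hdist : ∀ x ∈ ball (0 : EuclideanSpace ℝ (Fin n)) R, ∀ y ∈ ball 0 R, dist y x < 2 * R :=
    fun x hx y hy => (dist_triangle_right y x 0).trans_lt
      (by linarith [mem_ball.mp hx, mem_ball.mp hy])
  calc _ ≤ _ := lintegral_lintegral_abs_indicator_sub_div_rpow_le volume Ω measurableSet_ball
        (by positivity) hdist
    _ ≤ ∑' k : ℕ, volume (ball (0 : EuclideanSpace ℝ (Fin n)) 1) *
          ENNReal.ofReal (C * 2 ^ ((n : ℝ) + s)) *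
            ENNReal.ofReal ((2 * R / 2 ^ k) ^ (δ - s)) := by
        refine ENNReal.tsum_le_tsum fun k => ?_
        have hρ : 0 < 2 * R / 2 ^ k := by positivity
        have hterm := ofReal_rpow_mul_measure_ball_mul_le volume hρ
          (hΩ _ ⟨hρ, div_le_self (by positivity) (one_le_pow₀ one_le_two)⟩) (s := s)
        rwa [finrank_euclideanSpace_fin, div_div, ← pow_succ] at hterm
    _ = K := ENNReal.tsum_mul_left
    _ ≤ ENNReal.ofReal (K.toReal + 1) := by
        rw [← ENNReal.ofReal_toReal hK]
        exact ENNReal.ofReal_le_ofReal (by simp)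

theorem fractional_seminorm_bound (n : ℕ) (R C δ s : ℝ) (hR : 0 < R) (hC : 0 < C)
    (hδ : δ ∈ Set.Ioc (0:ℝ) 1) (hs : s ∈ Set.Ioo (0:ℝ) δ) :
    ∃ C' : ℝ, 0 < C' ∧ ∀ Ω : Set (EuclideanSpace ℝ (Fin n)),
      Ω ⊆ Metric.ball 0 R →
      (∀ r ∈ Set.Ioc (0:ℝ) (2 * R),
        volume (Metric.thickening r (frontier Ω)) ≤ ENNReal.ofReal (C * r ^ δ)) →
      (∫⁻ x in Metric.ball (0 : EuclideanSpace ℝ (Fin n)) R,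
        ∫⁻ y in Metric.ball (0 : EuclideanSpace ℝ (Fin n)) R,
          ENNReal.ofReal
            (|Set.indicator Ω (fun _ => (1:ℝ)) x - Set.indicator Ω (fun _ => (1:ℝ)) y| /
              dist x y ^ ((n : ℝ) + s)))
        ≤ ENNReal.ofReal C' :=
  fractional_seminorm_bound_general n R C δ s hR hs
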